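/- arXiv:1907.07336 — 4 statements merged into one kernel-verified Lean document; each statement's English description precedes it below -/
import Mathlib

section
/- Let S be a timelike photon surface of a spacetime (M, g) with dim M ≥ 3, let n be the unit normal of S, let γ be a null geodesic contained in S passing through a point p ∈ S with tangent vector k, and let X be a deviation vector field along γ (a solution of the geodesic deviation equation) satisfying X|_p ∝ n|_p. Then the acceleration scalar a := g(X, ∇_k∇_k X) at p equals −X² R_{acbd} n^a k^c n^b k^d, where X² := g_{ab}X^aX^b > 0 and R is the Riemann curvature tensor of (M, g). Consequently γ is stable at p (a|_p < 0) if and only if R_{acbd} k^a n^c k^b n^d > 0 at p, unstable at p (a|_p > 0) if and only if R_{acbd} k^a n^c k^b n^d < 0 at p, and marginally stable at p (a|_p = 0) if and only if R_{acbd} k^a n^c k^b n^d = 0 at p. -/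
set_option autoImplicit false

noncomputable section

/-- An abstract `D`-dimensional spacetime `(M, g)`: a family of tangent spaces over a
type of points, equipped with a Lorentzian metric, curvature tensors and covariant
derivative operators.  The standard differential-geometric identities relating these
data that are relevant below are recorded as fields, so that the structure is an
axiomatisation of a smooth Lorentzian manifold. -/
structure Spacetime (D : ℕ) where
  /-- the points of the spacetime manifold `M` -/
  Point : Type
  /-- the tangent space at each point -/
  Vec : Point → Type
  [vecGroup : ∀ p : Point, AddCommGroup (Vec p)]
  [vecModule : ∀ p : Point, Module ℝ (Vec p)]
  [vecFin : ∀ p : Point, FiniteDimensional ℝ (Vec p)]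
  dim_eq : ∀ p : Point, Module.finrank ℝ (Vec p) = D
  /-- the metric at each point, as a bilinear form -/
  g : ∀ p : Point, Vec p →ₗ[ℝ] Vec p →ₗ[ℝ] ℝ
  g_symm : ∀ (p : Point) (u v : Vec p), g p u v = g p v u
  g_nondeg : ∀ (p : Point) (u : Vec p), (∀ v : Vec p, g p u v = 0) → u = 0
  /-- Lorentzian signature `(-,+,⋯,+)` -/
  lorentzian : ∀ p : Point, ∃ b : Module.Basis (Fin D) ℝ (Vec p), ∀ i j : Fin D,
    g p (b i) (b j) = if i = j then (if (i : ℕ) = 0 then (-1 : ℝ) else 1) else 0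
  /-- `IsVelocity c v` asserts that `v t ∈ T_{c t} M` is the velocity (tangent) field
  of the smooth curve `c : ℝ → M`. -/
  IsVelocity : (c : ℝ → Point) → (∀ t, Vec (c t)) → Prop
  /-- covariant derivative of a vector field along a curve -/
  covDerivAlong : (c : ℝ → Point) → (∀ t, Vec (c t)) → (∀ t, Vec (c t))
  /-- directional derivative of a scalar field -/
  dirDeriv : (Point → ℝ) → ∀ p : Point, Vec p →ₗ[ℝ] ℝ
  /-- covariant derivative `∇Y` of a vector field, linear in the direction -/
  covDerivVF : (∀ p, Vec p) → ∀ p : Point, Vec p →ₗ[ℝ] Vec p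
  /-- covariant derivative `(∇_u T)(·,·)` of a `(0,2)`-tensor field in a direction `u` -/
  covDeriv2 : (∀ p, Vec p → Vec p → ℝ) → ∀ p : Point, Vec p → (Vec p → Vec p → ℝ)
  dirDeriv_const : ∀ (a : ℝ) (p : Point) (u : Vec p), dirDeriv (fun _ => a) p u = 0
  /-- metric compatibility of the covariant derivative -/
  metric_compat : ∀ (Y Z : ∀ p, Vec p) (p : Point) (u : Vec p),
    dirDeriv (fun q => g q (Y q) (Z q)) p u
      = g p (covDerivVF Y p u) (Z p) + g p (Y p) (covDerivVF Z p u)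
  /-- along a curve, `(T(W,W))' = (∇_{ċ} T)(W,W)` whenever `W` is parallel -/
  covDeriv2_parallel : ∀ (T : ∀ p, Vec p → Vec p → ℝ) (c : ℝ → Point)
    (v : ∀ t, Vec (c t)), IsVelocity c v →
    ∀ (W : ∀ t, Vec (c t)), (∀ t, covDerivAlong c W t = 0) →
    ∀ t : ℝ, HasDerivAt (fun s => T (c s) (W s) (W s)) (covDeriv2 T (c t) (v t) (W t) (W t)) t
  /-- the Riemann curvature tensor, fully covariant:
  `Riemann p x y z w = R_{abcd} x^a y^b z^c w^d` -/
  Riemann : ∀ p : Point, Vec p →ₗ[ℝ] Vec p →ₗ[ℝ] Vec p →ₗ[ℝ] Vec p →ₗ[ℝ] ℝ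
  riemann_antisym₁ : ∀ (p : Point) (x y z w : Vec p), Riemann p x y z w = - Riemann p y x z w
  riemann_antisym₂ : ∀ (p : Point) (x y z w : Vec p), Riemann p x y z w = - Riemann p x y w z
  riemann_pair_symm : ∀ (p : Point) (x y z w : Vec p), Riemann p x y z w = Riemann p z w x y
  /-- the Ricci tensor -/
  Ricci : ∀ p : Point, Vec p →ₗ[ℝ] Vec p →ₗ[ℝ] ℝ
  ricci_symm : ∀ (p : Point) (x y : Vec p), Ricci p x y = Ricci p y x
  /-- the scalar curvature -/
  Scal : Point → ℝ
  /-- the Weyl tensor, fully covariant, with the same index conventions as `Riemann` -/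
  Weyl : ∀ p : Point, Vec p →ₗ[ℝ] Vec p →ₗ[ℝ] Vec p →ₗ[ℝ] Vec p →ₗ[ℝ] ℝ
  weyl_antisym₁ : ∀ (p : Point) (x y z w : Vec p), Weyl p x y z w = - Weyl p y x z w
  weyl_antisym₂ : ∀ (p : Point) (x y z w : Vec p), Weyl p x y z w = - Weyl p x y w z
  weyl_pair_symm : ∀ (p : Point) (x y z w : Vec p), Weyl p x y z w = Weyl p z w x y
  /-- the Weyl tensor is totally trace-free -/
  weyl_traceFree : ∀ (p : Point) (b : Module.Basis (Fin D) ℝ (Vec p)) (s : Fin D → ℝ),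
    (∀ i j : Fin D, g p (b i) (b j) = if i = j then s i else 0) →
    ∀ x y : Vec p, (∑ i : Fin D, s i * Weyl p (b i) x (b i) y) = 0
  /-- the decomposition of the Riemann tensor into its Weyl, Ricci and scalar parts -/
  weyl_decomposition : 3 ≤ D → ∀ (p : Point) (x y z w : Vec p),
    Riemann p x y z w =
      Weyl p x y z w
      + ((D : ℝ) - 2)⁻¹ * (g p x z * Ricci p y w - g p x w * Ricci p y z
          + g p y w * Ricci p x z - g p y z * Ricci p x w)
      - Scal p / (((D : ℝ) - 1) * ((D : ℝ) - 2))
          * (g p x z * g p y w - g p x w * g p y z)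

attribute [instance] Spacetime.vecGroup Spacetime.vecModule Spacetime.vecFin

namespace Spacetime

variable {D : ℕ} (X : Spacetime D)

/-- transport of a tangent vector along an equality of base points -/
def vcast {p q : X.Point} (h : p = q) (v : X.Vec p) : X.Vec q := h ▸ v

/-- an affinely parametrised geodesic, given by a curve together with its velocity field -/
def IsGeodesic (c : ℝ → X.Point) (v : ∀ t, X.Vec (c t)) : Prop :=
  X.IsVelocity c v ∧ ∀ t : ℝ, X.covDerivAlong c v t = 0

/-- a null affinely parametrised geodesic -/
def IsNullGeodesic (c : ℝ → X.Point) (v : ∀ t, X.Vec (c t)) : Prop :=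
  X.IsGeodesic c v ∧ ∀ t : ℝ, X.g (c t) (v t) (v t) = 0

end Spacetime

/-- A hypersurface `S` of an abstract spacetime, given by its carrier set together with
its tangent hyperplanes, a unit normal, and its shape operator (the second fundamental
form with one index raised). -/
structure Hypersurface {D : ℕ} (X : Spacetime D) where
  carrier : Set X.Point
  /-- the tangent hyperplane `T_p S ⊂ T_p M` -/
  tangent : ∀ (p : X.Point), p ∈ carrier → Submodule ℝ (X.Vec p)
  tangent_rank : ∀ (p : X.Point) (hp : p ∈ carrier),
    Module.finrank ℝ (tangent p hp) = D - 1
  /-- the unit normal `n` of `S` -/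
  normal : ∀ (p : X.Point), p ∈ carrier → X.Vec p
  normal_orth : ∀ (p : X.Point) (hp : p ∈ carrier),
    ∀ v ∈ tangent p hp, X.g p (normal p hp) v = 0
  /-- the shape operator `χ^a{}_b` of `S`, extended to all of `T_p M` by `χ(n) = 0` -/
  shape : ∀ (p : X.Point), p ∈ carrier → (X.Vec p →ₗ[ℝ] X.Vec p)
  shape_symm : ∀ (p : X.Point) (hp : p ∈ carrier) (u v : X.Vec p),
    X.g p (shape p hp u) v = X.g p (shape p hp v) u
  shape_normal : ∀ (p : X.Point) (hp : p ∈ carrier), shape p hp (normal p hp) = 0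
  shape_tangent : ∀ (p : X.Point) (hp : p ∈ carrier) (u : X.Vec p),
    shape p hp u ∈ tangent p hp
  /-- Gauss–Weingarten relation: along any curve inside the hypersurface, the second
  fundamental form applied to the velocity is minus the normal component of the
  acceleration, `χ(v,v) = − g(n, ∇_v v)`. -/
  sff_spec : ∀ (c : ℝ → X.Point) (v : ∀ t, X.Vec (c t)), X.IsVelocity c v →
    ∀ (hc : ∀ t, c t ∈ carrier) (t : ℝ),
      X.g (c t) (shape (c t) (hc t) (v t)) (v t)
        = - X.g (c t) (normal (c t) (hc t)) (X.covDerivAlong c v t)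

namespace Hypersurface

variable {D : ℕ} {X : Spacetime D} (S : Hypersurface X)

/-- the (fully covariant) second fundamental form `χ_{ab}` of `S` -/
def sff (p : X.Point) (hp : p ∈ S.carrier) (u v : X.Vec p) : ℝ :=
  X.g p (S.shape p hp u) v

/-- the trace `Θ = h^{ab} χ_{ab} = χ^a{}_a` of the second fundamental form -/
def theta (p : X.Point) (hp : p ∈ S.carrier) : ℝ :=
  LinearMap.trace ℝ (X.Vec p) (S.shape p hp)

/-- the projector `h^a{}_b = δ^a{}_b − n^a n_b` onto `S` (for a unit spacelike normal);
`g(proj ·, ·)` is the induced metric `h_{ab}`. -/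
def proj (p : X.Point) (hp : p ∈ S.carrier) : X.Vec p →ₗ[ℝ] X.Vec p :=
  LinearMap.id - (X.g p (S.normal p hp)).smulRight (S.normal p hp)

/-- the trace-free part `σ_{ab} = χ_{ab} − Θ h_{ab}/(D−1)` of the second
fundamental form of `S` -/
def sigma (p : X.Point) (hp : p ∈ S.carrier) (u v : X.Vec p) : ℝ :=
  X.g p ((S.shape p hp - (S.theta p hp / ((D : ℝ) - 1)) • S.proj p hp) u) v

/-- a timelike hypersurface: the unit normal is spacelike -/
def IsTimelike : Prop :=
  ∀ (p : X.Point) (hp : p ∈ S.carrier), X.g p (S.normal p hp) (S.normal p hp) = 1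

/-- nowhere spacelike: at each point there is a nonzero causal tangent vector -/
def NowhereSpacelike : Prop :=
  ∀ (p : X.Point) (hp : p ∈ S.carrier), ∃ v ∈ S.tangent p hp, v ≠ 0 ∧ X.g p v v ≤ 0

/-- **Photon surface** (Claudel–Virbhadra–Ellis): an immersed nowhere-spacelike
hypersurface `S` such that for every `p ∈ S` and every null `k ∈ T_p S` there is a null
geodesic `γ : (−ε, ε) → M` with `γ(0) = p`, `γ̇(0) = k`, whose image lies in `S`. -/
def IsPhotonSurface : Prop :=
  S.NowhereSpacelike ∧
  ∀ (p : X.Point) (hp : p ∈ S.carrier) (k : X.Vec p),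
    k ∈ S.tangent p hp → X.g p k k = 0 →
    ∃ (c : ℝ → X.Point) (v : ∀ t, X.Vec (c t)) (ε : ℝ),
      0 < ε ∧ X.IsVelocity c v ∧
      (∀ t : ℝ, |t| < ε → X.covDerivAlong c v t = 0) ∧
      (∀ t : ℝ, |t| < ε → X.g (c t) (v t) (v t) = 0) ∧
      (∃ h : c 0 = p, X.vcast h (v 0) = k) ∧
      (∀ t : ℝ, |t| < ε → c t ∈ S.carrier)

end Hypersurface

/-! The deviation equation gives `a = -R(Y,k,Y,k)` at once. Since `Y = λ n` with `g(n,n) = 1`,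
both `R(Y,k,Y,k)` and `g(Y,Y)` are `λ²` times their values at `n`, so
`a = -g(Y,Y) R(n,k,n,k)` with `g(Y,Y) = λ² > 0`; the sign of `a` is thus opposite to that of
`R(n,k,n,k) = R(k,n,k,n)`. -/

theorem sign_iff_of_eq_neg_mul {α : Type*} [Ring α] [LinearOrder α] [IsStrictOrderedRing α]
    {a q r : α} (hq : 0 < q) (ha : a = -(q * r)) :
    (a < 0 ↔ 0 < r) ∧ (0 < a ↔ r < 0) ∧ (a = 0 ↔ r = 0) := by
  subst ha
  refine ⟨by rw [neg_lt_zero, mul_pos_iff_of_pos_left hq], ?_,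
    by rw [neg_eq_zero, mul_eq_zero, or_iff_right hq.ne']⟩
  rw [neg_pos, ← smul_eq_mul, smul_neg_iff_of_pos_left hq]

namespace Spacetime

variable {D : ℕ} (X : Spacetime D) {p : X.Point}

@[simp]
theorem vcast_rfl (u : X.Vec p) : X.vcast rfl u = u := rfl

theorem g_smul_smul (l : ℝ) (u : X.Vec p) : X.g p (l • u) (l • u) = l ^ 2 * X.g p u u := by
  simp only [map_smul, LinearMap.smul_apply, smul_eq_mul]
  ring

theorem riemann_swap_swap (x y z w : X.Vec p) : X.Riemann p y x w z = X.Riemann p x y z w := by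
  rw [X.riemann_antisym₁, X.riemann_antisym₂, neg_neg]

theorem riemann_eq_g_mul_riemann_of_eq_smul {n u : X.Vec p} {l : ℝ} (hn : X.g p n n = 1)
    (hu : u = l • n) (k : X.Vec p) :
    X.Riemann p u k u k = X.g p u u * X.Riemann p n k n k := by
  subst hu
  simp only [hn, map_smul, LinearMap.smul_apply, smul_eq_mul]
  ring

end Spacetime

theorem stability_via_riemann_general {D : ℕ} (X : Spacetime D)
    (S : Hypersurface X) (hTL : S.IsTimelike)
    (p : X.Point) (hp : p ∈ S.carrier)
    -- `γ` : a null geodesic contained in `S`, passing through `p` with tangent `k`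
    (c : ℝ → X.Point) (v : ∀ t, X.Vec (c t)) (h0 : c 0 = p)
    (k : X.Vec p) (hk : X.vcast h0 (v 0) = k)
    -- `Y` : a deviation vector field along `γ`, i.e. a solution of the geodesic
    -- deviation equation `∇_k ∇_k Y = −R(·, k, Y, k)` (fully lowered form)
    (Y : ∀ t, X.Vec (c t))
    (hdev : ∀ (t : ℝ) (w : X.Vec (c t)),
      X.g (c t) w (X.covDerivAlong c (X.covDerivAlong c Y) t)
        = - X.Riemann (c t) w (v t) (Y t) (v t))
    -- `Y|_p ∝ n|_p`
    (lam : ℝ) (hlam : lam ≠ 0) (hY0 : X.vcast h0 (Y 0) = lam • S.normal p hp)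
    -- the acceleration scalar `a = g(Y, ∇_k ∇_k Y)` at `p`
    (a : ℝ)
    (ha : a = X.g p (X.vcast h0 (Y 0))
      (X.vcast h0 (X.covDerivAlong c (X.covDerivAlong c Y) 0))) :
    (a = - (X.g p (X.vcast h0 (Y 0)) (X.vcast h0 (Y 0)))
          * X.Riemann p (S.normal p hp) k (S.normal p hp) k)
    ∧ 0 < X.g p (X.vcast h0 (Y 0)) (X.vcast h0 (Y 0))
    ∧ (a < 0 ↔ 0 < X.Riemann p k (S.normal p hp) k (S.normal p hp))
    ∧ (0 < a ↔ X.Riemann p k (S.normal p hp) k (S.normal p hp) < 0)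
    ∧ (a = 0 ↔ X.Riemann p k (S.normal p hp) k (S.normal p hp) = 0) := by
  subst h0 hk
  simp only [Spacetime.vcast_rfl] at hY0 ha ⊢
  have hnorm : X.g (c 0) (Y 0) (Y 0) = lam ^ 2 := by
    rw [hY0, X.g_smul_smul, hTL, mul_one]
  have hpos : 0 < X.g (c 0) (Y 0) (Y 0) := by rw [hnorm]; positivity
  have ha' : a = -(X.g (c 0) (Y 0) (Y 0) * X.Riemann (c 0) (S.normal (c 0) hp) (v 0)
      (S.normal (c 0) hp) (v 0)) := by
    rw [ha, hdev, X.riemann_eq_g_mul_riemann_of_eq_smul (hTL _ hp) hY0]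
  refine ⟨by rw [ha', neg_mul], hpos, ?_⟩
  rw [X.riemann_swap_swap]
  exact sign_iff_of_eq_neg_mul hpos ha'

/-- Let `S` be a timelike photon surface of a spacetime of dimension
`≥ 3` with unit normal `n`, let `γ` be a null geodesic in `S` through `p` with tangent
`k`, and let `Y` be a deviation vector field along `γ` (a solution of the geodesic
deviation equation) with `Y|_p ∝ n|_p`.  Then the acceleration scalar
`a := g(Y, ∇_k ∇_k Y)` at `p` equals `− Y² R_{acbd} n^a k^c n^b k^d` with
`Y² := g(Y,Y) > 0`; consequently `γ` is stable at `p` (`a < 0`) iff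
`R_{acbd} k^a n^c k^b n^d > 0`, unstable (`a > 0`) iff `R_{acbd} k^a n^c k^b n^d < 0`,
and marginally stable (`a = 0`) iff `R_{acbd} k^a n^c k^b n^d = 0`. -/
theorem stability_via_riemann {D : ℕ} (hD : 3 ≤ D) (X : Spacetime D)
    (S : Hypersurface X) (hTL : S.IsTimelike) (hPS : S.IsPhotonSurface)
    (p : X.Point) (hp : p ∈ S.carrier)
    -- `γ` : a null geodesic contained in `S`, passing through `p` with tangent `k`
    (c : ℝ → X.Point) (v : ∀ t, X.Vec (c t)) (hγ : X.IsNullGeodesic c v)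
    (hγS : ∀ t : ℝ, c t ∈ S.carrier) (h0 : c 0 = p)
    (k : X.Vec p) (hk : X.vcast h0 (v 0) = k)
    -- `Y` : a deviation vector field along `γ`, i.e. a solution of the geodesic
    -- deviation equation `∇_k ∇_k Y = −R(·, k, Y, k)` (fully lowered form)
    (Y : ∀ t, X.Vec (c t))
    (hdev : ∀ (t : ℝ) (w : X.Vec (c t)),
      X.g (c t) w (X.covDerivAlong c (X.covDerivAlong c Y) t)
        = - X.Riemann (c t) w (v t) (Y t) (v t))
    -- `Y|_p ∝ n|_p`
    (lam : ℝ) (hlam : lam ≠ 0) (hY0 : X.vcast h0 (Y 0) = lam • S.normal p hp)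
    -- the acceleration scalar `a = g(Y, ∇_k ∇_k Y)` at `p`
    (a : ℝ)
    (ha : a = X.g p (X.vcast h0 (Y 0))
      (X.vcast h0 (X.covDerivAlong c (X.covDerivAlong c Y) 0))) :
    (a = - (X.g p (X.vcast h0 (Y 0)) (X.vcast h0 (Y 0)))
          * X.Riemann p (S.normal p hp) k (S.normal p hp) k)
    ∧ 0 < X.g p (X.vcast h0 (Y 0)) (X.vcast h0 (Y 0))
    ∧ (a < 0 ↔ 0 < X.Riemann p k (S.normal p hp) k (S.normal p hp))
    ∧ (0 < a ↔ X.Riemann p k (S.normal p hp) k (S.normal p hp) < 0)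
    ∧ (a = 0 ↔ X.Riemann p k (S.normal p hp) k (S.normal p hp) = 0) :=
  stability_via_riemann_general X S hTL p hp c v h0 k hk Y hdev lam hlam hY0 a ha
end
end

section
/- Let (M, g) be a conformally flat spacetime of dimension D ≥ 3 satisfying the null energy condition (R_{ab} k^a k^b ≥ 0 for all null vectors k). Then every timelike photon surface S of (M, g) is stable: for every p ∈ S and every null vector k ∈ T_pS, R_{acbd} k^a n^c k^b n^d ≥ 0, where n is the unit normal of S. -/
set_option autoImplicit false

noncomputable section

namespace Spacetime

variable {D : ℕ} (X : Spacetime D)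

theorem riemann_eq_weyl_add_ricci_of_null_orthogonal (hD : 3 ≤ D) {p : X.Point} {k n : X.Vec p}
    (hkk : X.g p k k = 0) (hkn : X.g p k n = 0) :
    X.Riemann p k n k n = X.Weyl p k n k n + ((D : ℝ) - 2)⁻¹ * X.g p n n * X.Ricci p k k := by
  rw [X.weyl_decomposition hD p k n k n, X.g_symm p n k, hkk, hkn]
  ring

end Spacetime

namespace Hypersurface

variable {D : ℕ} {X : Spacetime D} (S : Hypersurface X)

theorem riemann_tangent_normal_eq_weyl_add_ricci (hD : 3 ≤ D) (hTL : S.IsTimelike) {p : X.Point}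
    (hp : p ∈ S.carrier) {k : X.Vec p} (hk : k ∈ S.tangent p hp) (hkk : X.g p k k = 0) :
    X.Riemann p k (S.normal p hp) k (S.normal p hp)
      = X.Weyl p k (S.normal p hp) k (S.normal p hp) + ((D : ℝ) - 2)⁻¹ * X.Ricci p k k := by
  have hkn : X.g p k (S.normal p hp) = 0 := by
    rw [X.g_symm]
    exact S.normal_orth p hp k hk
  rw [X.riemann_eq_weyl_add_ricci_of_null_orthogonal hD hkk hkn, hTL p hp, mul_one]

end Hypersurface

theorem conformally_flat_NEC_photon_surface_stable_general {D : ℕ} (hD : 3 ≤ D)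
    (X : Spacetime D)
    -- conformal flatness: the Weyl tensor vanishes identically
    (hCF : ∀ (p : X.Point) (x y z w : X.Vec p), X.Weyl p x y z w = 0)
    -- the null energy condition
    (hNEC : ∀ (p : X.Point) (k : X.Vec p), X.g p k k = 0 → 0 ≤ X.Ricci p k k)
    (S : Hypersurface X) (hTL : S.IsTimelike) :
    ∀ (p : X.Point) (hp : p ∈ S.carrier) (k : X.Vec p),
      k ∈ S.tangent p hp → X.g p k k = 0 →
      0 ≤ X.Riemann p k (S.normal p hp) k (S.normal p hp) := by
  intro p hp k hk hkk
  rw [S.riemann_tangent_normal_eq_weyl_add_ricci hD hTL hp hk hkk, hCF, zero_add]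
  have hD2 : (0 : ℝ) < (D : ℝ) - 2 := by
    have : (3 : ℝ) ≤ D := by exact_mod_cast hD
    linarith
  exact mul_nonneg (inv_nonneg.mpr hD2.le) (hNEC p k hkk)

/-- Let `(M,g)` be a conformally flat spacetime (vanishing Weyl
tensor) of dimension `D ≥ 3` satisfying the null energy condition
(`R_{ab} k^a k^b ≥ 0` for all null `k`).  Then every timelike photon surface `S` is
stable: for every `p ∈ S` and every null `k ∈ T_p S`,
`R_{acbd} k^a n^c k^b n^d ≥ 0`, where `n` is the unit normal of `S`. -/
theorem conformally_flat_NEC_photon_surface_stable {D : ℕ} (hD : 3 ≤ D)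
    (X : Spacetime D)
    -- conformal flatness: the Weyl tensor vanishes identically
    (hCF : ∀ (p : X.Point) (x y z w : X.Vec p), X.Weyl p x y z w = 0)
    -- the null energy condition
    (hNEC : ∀ (p : X.Point) (k : X.Vec p), X.g p k k = 0 → 0 ≤ X.Ricci p k k)
    (S : Hypersurface X) (hTL : S.IsTimelike) (hPS : S.IsPhotonSurface) :
    ∀ (p : X.Point) (hp : p ∈ S.carrier) (k : X.Vec p),
      k ∈ S.tangent p hp → X.g p k k = 0 →
      0 ≤ X.Riemann p k (S.normal p hp) k (S.normal p hp) :=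
  conformally_flat_NEC_photon_surface_stable_general hD X hCF hNEC S hTL
end
end

section
/- Let (M, g) be a three-dimensional spacetime satisfying the null energy condition (R_{ab} k^a k^b ≥ 0 for all null vectors k). Then every timelike photon surface S of (M, g) is stable: for every p ∈ S and every null vector k ∈ T_pS, R_{acbd} k^a n^c k^b n^d ≥ 0, where n is the unit normal of S. Consequently, a photon surface with an unstable null geodesic can exist only in spacetimes of dimension ≥ 4 when the null energy condition holds. -/
set_option autoImplicit false

noncomputable section

/-! In dimension three a 4-tensor that is antisymmetric in each pair of slots has nine
independent components, and the nine equations saying that its contraction vanishes kill them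
all, so the Weyl tensor is zero. For a null `k` tangent to a timelike hypersurface with unit
normal `n`, the Ricci decomposition then reduces `R(k, n, k, n)` to `Ric(k, k)`, which the null
energy condition makes nonnegative. -/

open Module

theorem eq_zero_of_symm_of_weighted_sum_eq_zero {𝕜 : Type*} [Field 𝕜] (hK : ringChar 𝕜 ≠ 2)
    {K : Fin 3 → Fin 3 → 𝕜} {s : Fin 3 → 𝕜} (hs : ∀ i, s i ≠ 0)
    (hsymm : ∀ i j, K i j = K j i) (hdiag : ∀ i, K i i = 0)
    (hsum : ∀ j, ∑ i, s i * K i j = 0) (i j : Fin 3) : K i j = 0 := by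
  have h0 := hsum 0
  have h1 := hsum 1
  have h2 := hsum 2
  simp only [Fin.sum_univ_three, hdiag, mul_zero, zero_add, add_zero] at h0 h1 h2
  rw [hsymm 1 0, hsymm 2 0] at h0
  rw [hsymm 2 1] at h1
  have cancel : ∀ a c, 2 * s a * s c * K a c = 0 → K a c = 0 := fun a c h => by
    simpa [hs a, hs c, Ring.two_ne_zero hK] using h
  have k01 := cancel 0 1 (by linear_combination s 0 * h0 + s 1 * h1 - s 2 * h2)
  have k02 := cancel 0 2 (by linear_combination s 0 * h0 - s 1 * h1 + s 2 * h2)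
  have k12 := cancel 1 2 (by linear_combination -s 0 * h0 + s 1 * h1 + s 2 * h2)
  fin_cases i <;> fin_cases j <;>
    first | exact hdiag _ | assumption | (rw [hsymm]; assumption)

theorem eq_zero_of_antisymm_of_contraction_eq_zero {𝕜 V : Type*} [Field 𝕜]
    (hK : ringChar 𝕜 ≠ 2) [AddCommGroup V] [Module 𝕜 V]
    {W : V →ₗ[𝕜] V →ₗ[𝕜] V →ₗ[𝕜] V →ₗ[𝕜] 𝕜}
    (b : Basis (Fin 3) 𝕜 V) {s : Fin 3 → 𝕜} (hs : ∀ i, s i ≠ 0)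
    (h₁ : ∀ x y z w, W x y z w = -W y x z w) (h₂ : ∀ x y z w, W x y z w = -W x y w z)
    (htr : ∀ x y, ∑ i, s i * W (b i) x (b i) y = 0) : W = 0 := by
  have self₁ : ∀ x z w, W x x z w = 0 := fun x z w =>
    (Ring.eq_self_iff_eq_zero_of_char_ne_two hK).mp (h₁ x x z w).symm
  have self₂ : ∀ x y z, W x y z z = 0 := fun x y z =>
    (Ring.eq_self_iff_eq_zero_of_char_ne_two hK).mp (h₂ x y z z).symm
  have mixed : ∀ m j l, m ≠ j → m ≠ l → j ≠ l → W (b m) (b j) (b m) (b l) = 0 := by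
    intro m j l hmj hml hjl
    have third : ∀ i, i ≠ m → i = j ∨ i = l := by
      revert m j l; decide
    have h := htr (b j) (b l)
    rw [Finset.sum_eq_single m (fun i _ him => by
      rcases third i him with rfl | rfl
      · rw [self₁, mul_zero]
      · rw [self₂, mul_zero]) (by simp)] at h
    exact (mul_eq_zero.mp h).resolve_left (hs m)
  have sectional : ∀ m a, W (b m) (b a) (b m) (b a) = 0 :=
    eq_zero_of_symm_of_weighted_sum_eq_zero hK hs (fun m a => by rw [h₁, h₂, neg_neg])
      (fun m => self₁ _ _ _) (fun a => htr (b a) (b a))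
  have hinge : ∀ m a c, W (b m) (b a) (b m) (b c) = 0 := by
    intro m a c
    by_cases hma : m = a
    · rw [hma, self₁]
    by_cases hmc : m = c
    · rw [hmc, self₂]
    by_cases hac : a = c
    · rw [hac, sectional]
    exact mixed m a c hma hmc hac
  -- Two 2-element subsets of `Fin 3` meet, so up to sign every component has the shape
  -- `W bₘ bₐ bₘ b_c`.
  have meet : ∀ i j k l : Fin 3, i ≠ j → k ≠ l → i = k ∨ i = l ∨ j = k ∨ j = l := by decide
  have basis_apply : ∀ i j k l, W (b i) (b j) (b k) (b l) = 0 := by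
    intro i j k l
    by_cases hij : i = j
    · rw [hij, self₁]
    by_cases hkl : k = l
    · rw [hkl, self₂]
    rcases meet i j k l hij hkl with rfl | rfl | rfl | rfl
    · exact hinge _ _ _
    · rw [h₂, hinge, neg_zero]
    · rw [h₁, hinge, neg_zero]
    · rw [h₁, h₂, hinge, neg_neg]
  refine b.ext fun i => b.ext fun j => b.ext fun k => b.ext fun l => ?_
  simpa using basis_apply i j k l

theorem Spacetime.weyl_eq_zero_of_dim_three (X : Spacetime 3) (p : X.Point) : X.Weyl p = 0 := by
  obtain ⟨b, hb⟩ := X.lorentzian p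
  refine eq_zero_of_antisymm_of_contraction_eq_zero (by simp [ringChar.eq_zero]) b
    (fun i => ?_) (X.weyl_antisym₁ p) (X.weyl_antisym₂ p) (X.weyl_traceFree p b _ hb)
  split_ifs <;> norm_num

theorem Hypersurface.riemann_tangent_normal_eq {D : ℕ} {X : Spacetime D} (S : Hypersurface X)
    (hS : S.IsTimelike) (hD : 3 ≤ D) {p : X.Point} (hp : p ∈ S.carrier) {k : X.Vec p}
    (hk : k ∈ S.tangent p hp) (hnull : X.g p k k = 0) :
    X.Riemann p k (S.normal p hp) k (S.normal p hp)
      = X.Weyl p k (S.normal p hp) k (S.normal p hp) + ((D : ℝ) - 2)⁻¹ * X.Ricci p k k := by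
  have hnk : X.g p (S.normal p hp) k = 0 := S.normal_orth p hp k hk
  have hkn : X.g p k (S.normal p hp) = 0 := by rw [X.g_symm, hnk]
  rw [X.weyl_decomposition hD, hnull, hnk, hkn, hS p hp]
  ring

theorem three_dimensional_NEC_photon_surface_stable_general (X : Spacetime 3)
    (hNEC : ∀ (p : X.Point) (k : X.Vec p), X.g p k k = 0 → 0 ≤ X.Ricci p k k)
    (S : Hypersurface X) (hTL : S.IsTimelike) :
    (∀ (p : X.Point) (hp : p ∈ S.carrier) (k : X.Vec p),
        k ∈ S.tangent p hp → X.g p k k = 0 →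
        0 ≤ X.Riemann p k (S.normal p hp) k (S.normal p hp))
    ∧ ¬ ∃ (p : X.Point) (hp : p ∈ S.carrier) (k : X.Vec p),
        k ∈ S.tangent p hp ∧ X.g p k k = 0 ∧
        X.Riemann p k (S.normal p hp) k (S.normal p hp) < 0 := by
  have stable : ∀ (p : X.Point) (hp : p ∈ S.carrier) (k : X.Vec p),
      k ∈ S.tangent p hp → X.g p k k = 0 →
      0 ≤ X.Riemann p k (S.normal p hp) k (S.normal p hp) := by
    intro p hp k hk hnull
    rw [S.riemann_tangent_normal_eq hTL le_rfl hp hk hnull, X.weyl_eq_zero_of_dim_three]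
    norm_num [hNEC p k hnull]
  exact ⟨stable, fun ⟨p, hp, k, hk, hnull, hneg⟩ => (stable p hp k hk hnull).not_gt hneg⟩

/-- Let `(M,g)` be a three-dimensional spacetime satisfying the null
energy condition (`R_{ab} k^a k^b ≥ 0` for all null `k`).  Then every timelike photon
surface `S` is stable: for every `p ∈ S` and every null `k ∈ T_p S`,
`R_{acbd} k^a n^c k^b n^d ≥ 0` (`n` the unit normal).  Consequently, a photon surface
with an unstable null geodesic (one with `R_{acbd} k^a n^c k^b n^d < 0`) can exist only
in dimension `≥ 4` when the null energy condition holds. -/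
theorem three_dimensional_NEC_photon_surface_stable (X : Spacetime 3)
    (hNEC : ∀ (p : X.Point) (k : X.Vec p), X.g p k k = 0 → 0 ≤ X.Ricci p k k)
    (S : Hypersurface X) (hTL : S.IsTimelike) (hPS : S.IsPhotonSurface) :
    (∀ (p : X.Point) (hp : p ∈ S.carrier) (k : X.Vec p),
        k ∈ S.tangent p hp → X.g p k k = 0 →
        0 ≤ X.Riemann p k (S.normal p hp) k (S.normal p hp))
    ∧ ¬ ∃ (p : X.Point) (hp : p ∈ S.carrier) (k : X.Vec p),
        k ∈ S.tangent p hp ∧ X.g p k k = 0 ∧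
        X.Riemann p k (S.normal p hp) k (S.normal p hp) < 0 :=
  three_dimensional_NEC_photon_surface_stable_general X hNEC S hTL
end
end

section
/- Let (M, g) be the D-dimensional static metric ds² = −f(r) dt² + g(r) dr² + r² (dχ² + s²(χ) dΩ²_{D−3}) with f > 0, g > 0 and s(χ) = sin χ, χ, or sinh χ (spherical, planar, or hyperbolic symmetry), and let S_r be a hypersurface of constant radius r with unit normal n = √g dr. Then the trace-free part of the second fundamental form of S_r in the orthonormal tetrad {e_{(μ)}} with e_{(μ)} ∝ ∂_μ is σ_{(μ)(ν)} = −(1/(2(D−1))) ((f r^{−2})′/(f r^{−2})) g^{−1/2} M_{(μ)(ν)}, where M_{(μ)(ν)} = diag[D−2, 0, 1, ..., 1] and ′ denotes d/dr. Consequently, S_r is a photon surface if and only if (f r^{−2})′ = 0 at that radius. -/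
set_option autoImplicit false
noncomputable section

/-- Diagonal components `g_{μμ}` of the `D`-dimensional static metric
`ds² = −f(r) dt² + g(r) dr² + r² (dχ² + s²(χ) dΩ²_{D−3})`
in the coordinates `(x 0, x 1, x 2, x 3, …) = (t, r, χ, θ₁, …, θ_{D−3})`,
where `dΩ²_{D−3}` is the round metric of the unit `(D−3)`-sphere. -/
def metricComp (f gg s : ℝ → ℝ) (μ : ℕ) (x : ℕ → ℝ) : ℝ :=
  if μ = 0 then - f (x 1)
  else if μ = 1 then gg (x 1)
  else if μ = 2 then (x 1) ^ 2
  else (x 1) ^ 2 * (s (x 2)) ^ 2 * ∏ j ∈ Finset.Ico 3 μ, (Real.sin (x j)) ^ 2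

/-- components of the induced (tetrad) Minkowski metric `h_{(μ)(ν)}` tangent to a
constant-radius hypersurface; the normal direction `μ = 1` is excluded -/
def etaTangent (μ ν : ℕ) : ℝ :=
  if μ = ν then (if μ = 0 then (-1 : ℝ) else if μ = 1 then 0 else 1) else 0

/-- Components `χ_{(μ)(ν)}` of the second fundamental form of the constant-radius
hypersurface `S_r` with unit normal `n = √g dr`, in the orthonormal tetrad
`e_{(μ)} ∝ ∂_μ`: the diagonal formula
`χ_{(μ)(μ)} = ∂_r g_{μμ} / (2 √(g_{rr}) |g_{μμ}|)` (off-diagonal components vanish). -/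
def chiTetrad (f gg s : ℝ → ℝ) (μ : ℕ) (x : ℕ → ℝ) : ℝ :=
  if μ = 1 then 0
  else (2 * Real.sqrt (gg (x 1)))⁻¹ *
    deriv (fun r => metricComp f gg s μ (Function.update x 1 r)) (x 1)
      / |metricComp f gg s μ x|

/-- the trace `Θ = h^{(μ)(ν)} χ_{(μ)(ν)}` of the second fundamental form of `S_r` -/
def thetaTetrad (D : ℕ) (f gg s : ℝ → ℝ) (x : ℕ → ℝ) : ℝ :=
  ∑ μ ∈ Finset.range D, etaTangent μ μ * chiTetrad f gg s μ x

/-- the trace-free part `σ_{(μ)(ν)} = χ_{(μ)(ν)} − Θ h_{(μ)(ν)}/(D−1)` of the second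
fundamental form of `S_r`, in the orthonormal tetrad -/
def sigmaTetrad (D : ℕ) (f gg s : ℝ → ℝ) (μ ν : ℕ) (x : ℕ → ℝ) : ℝ :=
  (if μ = ν then chiTetrad f gg s μ x else 0)
    - thetaTetrad D f gg s x / ((D : ℝ) - 1) * etaTangent μ ν

/-- the matrix `M_{(μ)(ν)} = diag[D−2, 0, 1, …, 1]` -/
def Mdiag (D : ℕ) (μ ν : ℕ) : ℝ :=
  if μ = ν then (if μ = 0 then (D : ℝ) - 2 else if μ = 1 then 0 else 1) else 0

/-- a point in the coordinate domain, off the symmetry axis -/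
def RegularPoint (D : ℕ) (s : ℝ → ℝ) (x : ℕ → ℝ) : Prop :=
  0 < x 1 ∧ s (x 2) ≠ 0 ∧ ∀ j : ℕ, 3 ≤ j → j < D → Real.sin (x j) ≠ 0

/-- By the Claudel–Virbhadra–Ellis/Perlick theorem, a timelike hypersurface is a photon
surface iff the trace-free part of its second fundamental form vanishes identically;
for a constant-radius hypersurface `S_r` this is the following condition. -/
def IsConstRadiusPhotonSurface (D : ℕ) (f gg s : ℝ → ℝ) (r : ℝ) : Prop :=
  ∀ x : ℕ → ℝ, x 1 = r → RegularPoint D s x →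
    ∀ μ < D, ∀ ν < D, sigmaTetrad D f gg s μ ν x = 0


/-!
In the tetrad `e_{(μ)} ∝ ∂_μ` the second fundamental form of `S_r` is diagonal, with
`χ_{(0)(0)} = -f′/(2f√g)` and every angular entry equal to `1/(r√g)`, since each angular metric
component is `r²` times a factor independent of `r`. Removing the trace leaves
`σ ∝ g^{-1/2} (f′/f − 2/r) M`, and `f′/f − 2/r` is the logarithmic derivative of `f r⁻²`.
As `σ_{(0)(0)}` carries the nonzero factor `D − 2`, `σ` vanishes exactly when `(f r⁻²)′ = 0`.
-/

open Function

section ConstantRadiusSurface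

variable {f gg s : ℝ → ℝ} {x : ℕ → ℝ}

lemma metricComp_update_zero (r : ℝ) :
    metricComp f gg s 0 (update x 1 r) = -f r := by
  simp [metricComp]

lemma metricComp_update_of_two_le {μ : ℕ} (hμ : 2 ≤ μ) (r : ℝ) :
    metricComp f gg s μ (update x 1 r) = r ^ 2 * metricComp f gg s μ (update x 1 1) := by
  have hprod : ∀ t : ℝ, ∏ j ∈ Finset.Ico 3 μ, Real.sin (update x 1 t j) ^ 2
      = ∏ j ∈ Finset.Ico 3 μ, Real.sin (x j) ^ 2 := fun t =>
    Finset.prod_congr rfl fun j hj => by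
      rw [update_of_ne (by simp only [Finset.mem_Ico] at hj; omega)]
  simp only [metricComp, hprod, update_self, update_of_ne (by norm_num : (2 : ℕ) ≠ 1),
    if_neg (by omega : μ ≠ 0), if_neg (by omega : μ ≠ 1)]
  split_ifs <;> ring

lemma metricComp_pos_of_regularPoint {D μ : ℕ} (hx : RegularPoint D s x) (h2μ : 2 ≤ μ)
    (hμD : μ < D) : 0 < metricComp f gg s μ x := by
  obtain ⟨hx1, hs2, hsin⟩ := hx
  unfold metricComp
  split_ifs
  · omega
  · omega
  · positivity
  · refine mul_pos (by positivity) (Finset.prod_pos fun j hj => ?_)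
    simp only [Finset.mem_Ico] at hj
    have := hsin j hj.1 (by omega)
    positivity

lemma chiTetrad_zero (hf : 0 < f (x 1)) :
    chiTetrad f gg s 0 x = -(2 * √(gg (x 1)))⁻¹ * (deriv f (x 1) / f (x 1)) := by
  have hcomp : metricComp f gg s 0 x = -f (x 1) := by simp [metricComp]
  simp only [chiTetrad, if_neg zero_ne_one, metricComp_update_zero, deriv.fun_neg, hcomp,
    abs_neg, abs_of_pos hf]
  ring

lemma chiTetrad_of_two_le {μ : ℕ} (hμ : 2 ≤ μ) (hpos : 0 < metricComp f gg s μ x) :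
    chiTetrad f gg s μ x = (√(gg (x 1)))⁻¹ / x 1 := by
  set C := metricComp f gg s μ (update x 1 1)
  have hcomp : metricComp f gg s μ x = x 1 ^ 2 * C := by
    conv_lhs => rw [← update_eq_self 1 x]
    exact metricComp_update_of_two_le hμ _
  have hC : 0 < C := pos_of_mul_pos_right (hcomp ▸ hpos) (sq_nonneg _)
  have hx1 : x 1 ≠ 0 := by rintro h; simp [hcomp, h] at hpos
  have hderiv : deriv (fun r => metricComp f gg s μ (update x 1 r)) (x 1) = 2 * x 1 * C := by
    rw [show (fun r => metricComp f gg s μ (update x 1 r)) = fun r => r ^ 2 * C from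
      funext (metricComp_update_of_two_le hμ)]
    simp
  simp only [chiTetrad, if_neg (by omega : μ ≠ 1), hderiv, hcomp, abs_of_pos (hcomp ▸ hpos)]
  field_simp

lemma thetaTetrad_eq {D : ℕ} (hD : 2 ≤ D) (hx : RegularPoint D s x) (hf : 0 < f (x 1)) :
    thetaTetrad D f gg s x
      = (√(gg (x 1)))⁻¹ * (deriv f (x 1) / f (x 1) / 2 + ((D : ℝ) - 2) / x 1) := by
  obtain ⟨n, rfl⟩ := Nat.exists_eq_add_of_le' hD
  have hang : ∀ i ∈ Finset.range n,
      etaTangent (i + 2) (i + 2) * chiTetrad f gg s (i + 2) x = (√(gg (x 1)))⁻¹ / x 1 :=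
    fun i hi => by
      rw [chiTetrad_of_two_le (by omega)
        (metricComp_pos_of_regularPoint hx (by omega) (by simpa using hi))]
      simp [etaTangent]
  rw [thetaTetrad, Finset.sum_range_succ', Finset.sum_range_succ', Finset.sum_congr rfl hang,
    chiTetrad_zero hf]
  simp [etaTangent, chiTetrad]
  ring

lemma logDeriv_div_sq {r : ℝ} (hd : DifferentiableAt ℝ f r) (hf : f r ≠ 0) (hr : r ≠ 0) :
    logDeriv (fun r => f r / r ^ 2) r = logDeriv f r - 2 / r := by
  rw [logDeriv_div (g := (· ^ 2)) r hf (pow_ne_zero 2 hr) hd (by fun_prop), logDeriv_pow]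
  norm_num

lemma sigmaTetrad_eq {D μ : ℕ} (hD : 2 ≤ D) (hx : RegularPoint D s x) (hf : 0 < f (x 1))
    (hd : DifferentiableAt ℝ f (x 1)) (hμ : μ < D) (ν : ℕ) :
    sigmaTetrad D f gg s μ ν x
      = - (2 * ((D : ℝ) - 1))⁻¹
          * (deriv (fun r => f r / r ^ 2) (x 1) / (f (x 1) / (x 1) ^ 2))
          * (√(gg (x 1)))⁻¹ * Mdiag D μ ν := by
  have hx1 : x 1 ≠ 0 := hx.1.ne'
  have hD1 : (D : ℝ) - 1 ≠ 0 := by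
    have : (2 : ℝ) ≤ D := by exact_mod_cast hD
    linarith
  rw [← logDeriv_apply, logDeriv_div_sq hd hf.ne' hx1, logDeriv_apply]
  unfold sigmaTetrad
  rw [thetaTetrad_eq hD hx hf]
  rcases eq_or_ne μ ν with rfl | hμν
  · rcases lt_trichotomy μ 1 with hμ0 | rfl | hμ2
    · obtain rfl : μ = 0 := by omega
      simp only [chiTetrad_zero hf, etaTangent, Mdiag, ↓reduceIte]
      field_simp
      ring
    · simp [chiTetrad, etaTangent, Mdiag]
    · simp only [chiTetrad_of_two_le hμ2 (metricComp_pos_of_regularPoint hx hμ2 hμ), etaTangent,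
        Mdiag, if_neg (by omega : μ ≠ 0), if_neg (by omega : μ ≠ 1), ↓reduceIte]
      field_simp
      ring
  · simp [etaTangent, Mdiag, hμν]

lemma isConstRadiusPhotonSurface_iff {D : ℕ} (hD : 3 ≤ D) (hx : RegularPoint D s x)
    (hf : 0 < f (x 1)) (hgg : 0 < gg (x 1)) (hd : DifferentiableAt ℝ f (x 1)) :
    IsConstRadiusPhotonSurface D f gg s (x 1) ↔ deriv (fun r => f r / r ^ 2) (x 1) = 0 := by
  constructor
  · intro hphoton
    have h00 := (sigmaTetrad_eq (by omega) hx hf hd (by omega) 0).symm.trans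
      (hphoton x rfl hx 0 (by omega) 0 (by omega))
    have hD3 : (3 : ℝ) ≤ D := by exact_mod_cast hD
    simpa [Mdiag, (by linarith : (D : ℝ) - 1 ≠ 0), (by linarith : (D : ℝ) - 2 ≠ 0), hf.ne',
      hx.1.ne', (Real.sqrt_pos.2 hgg).ne'] using h00
  · rintro hderiv y hy hy_reg μ hμ ν -
    rw [← hy] at hf hd hderiv
    rw [sigmaTetrad_eq (by omega) hy_reg hf hd hμ, hderiv]
    simp

end ConstantRadiusSurface

theorem sigma_of_constant_radius_surface_general {D : ℕ} (hD : 3 ≤ D)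
    (f gg s : ℝ → ℝ)
    (hf : ∀ r > 0, 0 < f r) (hgg : ∀ r > 0, 0 < gg r)
    (hfd : ∀ r > 0, DifferentiableAt ℝ f r)
    (x : ℕ → ℝ) (hx : RegularPoint D s x) :
    (∀ μ < D, ∀ ν < D,
      sigmaTetrad D f gg s μ ν x
        = - (2 * ((D : ℝ) - 1))⁻¹
            * (deriv (fun r => f r / r ^ 2) (x 1) / (f (x 1) / (x 1) ^ 2))
            * (Real.sqrt (gg (x 1)))⁻¹ * Mdiag D μ ν)
    ∧ (IsConstRadiusPhotonSurface D f gg s (x 1)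
        ↔ deriv (fun r => f r / r ^ 2) (x 1) = 0) := by
  have hx1 : 0 < x 1 := hx.1
  exact ⟨fun μ hμ ν _ => sigmaTetrad_eq (by omega) hx (hf _ hx1) (hfd _ hx1) hμ ν,
    isConstRadiusPhotonSurface_iff hD hx (hf _ hx1) (hgg _ hx1) (hfd _ hx1)⟩

/-- For the `D`-dimensional static metric
`ds² = −f dt² + g dr² + r²(dχ² + s²(χ) dΩ²_{D−3})` with `f, g > 0` and
`s = sin, id, sinh` (spherical, planar or hyperbolic symmetry), the trace-free part of
the second fundamental form of the constant-radius hypersurface `S_r` (with unit normal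
`n = √g dr`) in the orthonormal tetrad `e_{(μ)} ∝ ∂_μ` is
`σ_{(μ)(ν)} = −(1/(2(D−1))) ((f r⁻²)′/(f r⁻²)) g^{−1/2} M_{(μ)(ν)}` with
`M = diag[D−2, 0, 1, …, 1]`.  Consequently `S_r` is a photon surface iff
`(f r⁻²)′ = 0` at that radius. -/
theorem sigma_of_constant_radius_surface {D : ℕ} (hD : 3 ≤ D)
    (f gg s : ℝ → ℝ)
    (hs : s = Real.sin ∨ s = (fun χ => χ) ∨ s = Real.sinh)
    (hf : ∀ r > 0, 0 < f r) (hgg : ∀ r > 0, 0 < gg r)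
    (hfd : ∀ r > 0, DifferentiableAt ℝ f r)
    (x : ℕ → ℝ) (hx : RegularPoint D s x) :
    (∀ μ < D, ∀ ν < D,
      sigmaTetrad D f gg s μ ν x
        = - (2 * ((D : ℝ) - 1))⁻¹
            * (deriv (fun r => f r / r ^ 2) (x 1) / (f (x 1) / (x 1) ^ 2))
            * (Real.sqrt (gg (x 1)))⁻¹ * Mdiag D μ ν)
    ∧ (IsConstRadiusPhotonSurface D f gg s (x 1)
        ↔ deriv (fun r => f r / r ^ 2) (x 1) = 0) :=
  sigma_of_constant_radius_surface_general hD f gg s hf hgg hfd x hx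
end
end
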